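/- arXiv:2305.01420 — 3 statements merged into one kernel-verified Lean document; each statement's English description precedes it below -/
import Mathlib

section
/- Let A = {a₁, …, a_k} and B = {b₁, …, b_ℓ} be two nonempty disjoint finite sets of positive integers, let g = gcd(A ∪ B) and H = max(A ∪ B). Then there exist nonnegative integers r₁, …, r_k, s₁, …, s_ℓ, each at most (1 + k + ℓ)·H², such that Σᵢ rᵢ·aᵢ = g + Σᵢ sᵢ·bᵢ. -/
lemma exists_gcd_rep (S : Finset ℕ) : ∃ c : ℕ → ℤ, ((S.gcd id : ℕ) : ℤ) = ∑ x ∈ S, c x * x := by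
  induction S using Finset.induction_on with
  | empty => exact ⟨0, by simp⟩
  | @insert a s ha ih =>
    obtain ⟨c, hc⟩ := ih
    refine ⟨fun x => if x = a then Nat.gcdA a (s.gcd id) else Nat.gcdB a (s.gcd id) * c x, ?_⟩
    rw [Finset.sum_insert ha]
    beta_reduce
    rw [if_pos rfl]
    have h2 : ∑ x ∈ s, (if x = a then Nat.gcdA a (s.gcd id) else Nat.gcdB a (s.gcd id) * c x) * x
        = Nat.gcdB a (s.gcd id) * ∑ x ∈ s, c x * x := by
      rw [Finset.mul_sum]
      refine Finset.sum_congr rfl fun x hx => ?_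
      rw [if_neg (by rintro rfl; exact ha hx)]; ring
    rw [h2, ← hc, Finset.gcd_insert]
    have h3 := Nat.gcd_eq_gcd_ab a (s.gcd id)
    have h4 : gcd (id a) (s.gcd id) = Nat.gcd a (s.gcd id) := rfl
    rw [h4]
    push_cast [h3]
    ring

/-- Lemma 6 (number-theoretic balancing): for nonempty disjoint finite sets
`A`, `B` of positive integers with `g = gcd(A ∪ B)` and `H = max(A ∪ B)`, there
are nonnegative integer coefficients, each at most `(1 + |A| + |B|)·H²`, with
`Σ_{a∈A} r_a·a = g + Σ_{b∈B} s_b·b`. -/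
theorem number_theory_balancing (A B : Finset ℕ)
    (hA : A.Nonempty) (hB : B.Nonempty) (hdisj : Disjoint A B)
    (hpos : ∀ x ∈ A ∪ B, 0 < x) (g H : ℕ)
    (hg : g = (A ∪ B).gcd id)
    (hH : H = (A ∪ B).max' (hA.mono Finset.subset_union_left)) :
    ∃ r s : ℕ → ℕ,
      (∀ a ∈ A, r a ≤ (1 + A.card + B.card) * H ^ 2) ∧
      (∀ b ∈ B, s b ≤ (1 + A.card + B.card) * H ^ 2) ∧
      ∑ a ∈ A, r a * a = g + ∑ b ∈ B, s b * b := by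
  classical
  obtain ⟨u, hu⟩ := hA
  obtain ⟨v, hv⟩ := hB
  have huU : u ∈ A ∪ B := Finset.mem_union_left _ hu
  have hvU : v ∈ A ∪ B := Finset.mem_union_right _ hv
  have hle : ∀ x ∈ A ∪ B, x ≤ H := fun x hx => hH ▸ Finset.le_max' _ x hx
  have hu1 : 1 ≤ u := hpos u huU
  have hv1 : 1 ≤ v := hpos v hvU
  have huH : u ≤ H := hle u huU
  have hvH : v ≤ H := hle v hvU
  have hH1 : 1 ≤ H := le_trans hu1 huH
  have hgdvdu : g ∣ u := by rw [hg]; exact Finset.gcd_dvd huU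
  have hg1 : 1 ≤ g := Nat.pos_of_dvd_of_pos hgdvdu hu1
  have hgH : g ≤ H := le_trans (Nat.le_of_dvd hu1 hgdvdu) huH
  obtain ⟨c, hc⟩ := exists_gcd_rep (A ∪ B)
  rw [← hg] at hc
  set k := A.card with hk
  set l := B.card with hl
  have hk1 : 1 ≤ k := Finset.card_pos.mpr ⟨u, hu⟩
  have hl1 : 1 ≤ l := Finset.card_pos.mpr ⟨v, hv⟩
  have huZ : (0:ℤ) < (u:ℤ) := by exact_mod_cast hu1
  have hvZ : (0:ℤ) < (v:ℤ) := by exact_mod_cast hv1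
  have huHZ : (u:ℤ) ≤ (H:ℤ) := by exact_mod_cast huH
  have hvHZ : (v:ℤ) ≤ (H:ℤ) := by exact_mod_cast hvH
  have hH1Z : (1:ℤ) ≤ (H:ℤ) := by exact_mod_cast hH1
  have hk1Z : (1:ℤ) ≤ (k:ℤ) := by exact_mod_cast hk1
  have hl1Z : (1:ℤ) ≤ (l:ℤ) := by exact_mod_cast hl1
  have hg1Z : (1:ℤ) ≤ (g:ℤ) := by exact_mod_cast hg1
  have hgHZ : (g:ℤ) ≤ (H:ℤ) := by exact_mod_cast hgH
  have hHle : (H:ℤ) ≤ (H:ℤ) * H := le_mul_of_one_le_right (by linarith) hH1Z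
  have hHH0 : (0:ℤ) ≤ (H:ℤ) * H := by positivity
  have hHH1 : (1:ℤ) ≤ (H:ℤ) * H := le_trans hH1Z hHle
  have hkHH1 : (1:ℤ) ≤ (k:ℤ) * ((H:ℤ) * H) :=
    le_trans hHH1 (le_mul_of_one_le_left hHH0 hk1Z)
  have hkHH0 : (0:ℤ) ≤ (k:ℤ) * ((H:ℤ) * H) := by linarith
  have hlHH0 : (0:ℤ) ≤ (l:ℤ) * ((H:ℤ) * H) := by positivity
  have hBig : (H:ℤ) * H ≤ (1 + (k:ℤ) + l) * ((H:ℤ) * H) :=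
    le_mul_of_one_le_left hHH0 (by linarith)
  have hBigExp : (1 + (k:ℤ) + l) * ((H:ℤ) * H)
      = (H:ℤ) * H + (k:ℤ) * ((H:ℤ) * H) + (l:ℤ) * ((H:ℤ) * H) := by ring
  set d : ℕ → ℤ := fun x => c x % (u:ℤ) with hd
  set e : ℕ → ℤ := fun x => (-(c x)) % (u:ℤ) with he
  have hd0 : ∀ x, 0 ≤ d x := fun x => Int.emod_nonneg _ (ne_of_gt huZ)
  have hdlt : ∀ x, d x < u := fun x => Int.emod_lt_of_pos _ huZ
  have he0 : ∀ x, 0 ≤ e x := fun x => Int.emod_nonneg _ (ne_of_gt huZ)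
  have helt : ∀ x, e x < u := fun x => Int.emod_lt_of_pos _ huZ
  have hsplit : (g:ℤ) = c u * u + (∑ x ∈ A.erase u, c x * x) + ∑ x ∈ B, c x * x := by
    rw [hc, Finset.sum_union hdisj, ← Finset.add_sum_erase A (fun x => c x * x) hu]
  set cu : ℤ := c u + (∑ x ∈ A.erase u, (c x / (u:ℤ)) * x) - ∑ x ∈ B, ((-(c x)) / (u:ℤ)) * x
    with hcu
  have hE : cu * u = (g:ℤ) + (∑ x ∈ B, e x * x) - ∑ x ∈ A.erase u, d x * x := by
    have e1 : (∑ x ∈ A.erase u, (c x / (u:ℤ)) * x) * u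
        = (∑ x ∈ A.erase u, c x * x) - ∑ x ∈ A.erase u, d x * x := by
      rw [Finset.sum_mul, ← Finset.sum_sub_distrib]
      refine Finset.sum_congr rfl fun x _ => ?_
      have h := Int.mul_ediv_add_emod (c x) (u:ℤ)
      simp only [hd]
      linear_combination (x:ℤ) * h
    have e2 : (∑ x ∈ B, ((-(c x)) / (u:ℤ)) * x) * u
        = (-(∑ x ∈ B, c x * x)) - ∑ x ∈ B, e x * x := by
      rw [Finset.sum_mul, ← Finset.sum_neg_distrib, ← Finset.sum_sub_distrib]
      refine Finset.sum_congr rfl fun x _ => ?_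
      have h := Int.mul_ediv_add_emod (-(c x)) (u:ℤ)
      simp only [he]
      linear_combination (x:ℤ) * h
    have e3 : cu * u = c u * u + (∑ x ∈ A.erase u, (c x / (u:ℤ)) * x) * u
        - (∑ x ∈ B, ((-(c x)) / (u:ℤ)) * x) * u := by rw [hcu]; ring
    rw [e3, e1, e2]
    linarith [hsplit]
  -- bounds on the partial sums
  have hSD0 : 0 ≤ ∑ x ∈ A.erase u, d x * x :=
    Finset.sum_nonneg fun x _ => mul_nonneg (hd0 x) (Int.natCast_nonneg x)
  have hSE0 : 0 ≤ ∑ x ∈ B, e x * x :=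
    Finset.sum_nonneg fun x _ => mul_nonneg (he0 x) (Int.natCast_nonneg x)
  have hSD : ∑ x ∈ A.erase u, d x * x ≤ ((k:ℤ) - 1) * ((H:ℤ) * H) := by
    have hcard : (A.erase u).card = k - 1 := Finset.card_erase_of_mem hu
    calc ∑ x ∈ A.erase u, d x * x ≤ ∑ _x ∈ A.erase u, (H:ℤ) * H := by
          refine Finset.sum_le_sum fun x hx => ?_
          have hxU : x ∈ A ∪ B := Finset.mem_union_left _ (Finset.mem_of_mem_erase hx)
          have hx2 : (x:ℤ) ≤ H := by exact_mod_cast hle x hxU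
          have hdH : d x ≤ (H:ℤ) := le_trans (le_of_lt (hdlt x)) huHZ
          exact mul_le_mul hdH hx2 (Int.natCast_nonneg x) (by linarith)
      _ = ((A.erase u).card : ℤ) * ((H:ℤ) * H) := by
          rw [Finset.sum_const, nsmul_eq_mul]
      _ ≤ ((k:ℤ) - 1) * ((H:ℤ) * H) := by
          rw [hcard]
          have h5 : ((k - 1 : ℕ) : ℤ) = (k:ℤ) - 1 := by
            rw [Nat.cast_sub hk1]; norm_num
          rw [h5]
  have hSE : ∑ x ∈ B, e x * x ≤ (l:ℤ) * ((H:ℤ) * H) := by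
    calc ∑ x ∈ B, e x * x ≤ ∑ _x ∈ B, (H:ℤ) * H := by
          refine Finset.sum_le_sum fun x hx => ?_
          have hxU : x ∈ A ∪ B := Finset.mem_union_right _ hx
          have hx2 : (x:ℤ) ≤ H := by exact_mod_cast hle x hxU
          have heH : e x ≤ (H:ℤ) := le_trans (le_of_lt (helt x)) huHZ
          exact mul_le_mul heH hx2 (Int.natCast_nonneg x) (by linarith)
      _ = (l:ℤ) * ((H:ℤ) * H) := by rw [Finset.sum_const, nsmul_eq_mul, hl]
  have hkm1 : ((k:ℤ) - 1) * ((H:ℤ) * H) = (k:ℤ) * ((H:ℤ) * H) - (H:ℤ) * H := by ring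
  have hcuu_lb : (1:ℤ) - ((k:ℤ) - 1) * ((H:ℤ) * H) ≤ cu * u := by
    rw [hE]; linarith
  have hcuu_ub : cu * u ≤ (H:ℤ) + (l:ℤ) * ((H:ℤ) * H) := by
    rw [hE]; linarith
  -- the shift
  set t : ℤ := max 0 (-(cu / (v:ℤ))) with ht
  have ht0 : 0 ≤ t := le_max_left _ _
  have htval : 0 < t → t = -(cu / (v:ℤ)) := by
    intro hposr
    rcases max_choice 0 (-(cu / (v:ℤ))) with h' | h'
    · rw [h'] at ht; omega
    · rw [h'] at ht; exact ht
  have htv : -cu ≤ t * v := by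
    have h1 : cu / (v:ℤ) * v ≤ cu := Int.ediv_mul_le cu (ne_of_gt hvZ)
    have h2 : -(cu / (v:ℤ)) ≤ t := le_max_right _ _
    have h3 : (-(cu / (v:ℤ))) * v ≤ t * v := mul_le_mul_of_nonneg_right h2 (le_of_lt hvZ)
    have h4 : (-(cu / (v:ℤ))) * v = -(cu / (v:ℤ) * v) := by ring
    linarith
  have hru0 : 0 ≤ cu + t * v := by linarith
  have hkey : 0 < t → cu + t * v < (v:ℤ) := by
    intro hposr
    have hlt := Int.lt_ediv_add_one_mul_self cu hvZ
    have h2 : (cu / (v:ℤ) + 1) * v = (v:ℤ) - t * v := by rw [htval hposr]; ring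
    linarith
  have htu : t * u ≤ (k:ℤ) * ((H:ℤ) * H) - 1 := by
    rcases ht0.eq_or_lt with h | h
    · have h0 : t * u = 0 := by rw [← h]; ring
      linarith
    · have h1 : cu + t * v < (v:ℤ) := hkey h
      have h1' : (t * v) * u < ((v:ℤ) - cu) * u :=
        mul_lt_mul_of_pos_right (by linarith) huZ
      have hexp : ((v:ℤ) - cu) * u = (v:ℤ) * u - cu * u := by ring
      have hcomm : (t * v) * u = (t * u) * v := by ring
      have huv : (u:ℤ) * v ≤ (H:ℤ) * H :=
        mul_le_mul huHZ hvHZ (le_of_lt hvZ) (by linarith)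
      have hvu : (v:ℤ) * u = (u:ℤ) * v := by ring
      have htu0 : 0 ≤ t * u := mul_nonneg ht0 (le_of_lt huZ)
      have h3 : t * u ≤ (t * u) * v := le_mul_of_one_le_right htu0 (by exact_mod_cast hv1)
      linarith
  have hru_ub : cu + t * v ≤ (1 + (k:ℤ) + l) * ((H:ℤ) * H) := by
    rcases ht0.eq_or_lt with h | h
    · have h0 : t * v = 0 := by rw [← h]; ring
      rcases le_or_gt cu 0 with h' | h'
      · linarith
      · have h2 : cu ≤ cu * u := le_mul_of_one_le_right (le_of_lt h') (by exact_mod_cast hu1)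
        linarith
    · have h1 : cu + t * v < (v:ℤ) := hkey h
      linarith
  have hsv0 : 0 ≤ e v + t * u := add_nonneg (he0 v) (mul_nonneg ht0 (le_of_lt huZ))
  have hsv_ub : e v + t * u ≤ (1 + (k:ℤ) + l) * ((H:ℤ) * H) := by
    have h1 : e v ≤ (H:ℤ) := le_trans (le_of_lt (helt v)) huHZ
    linarith
  -- the integer equation
  have hEq : ∑ x ∈ A, (if x = u then cu + t * v else d x) * x
      = (g:ℤ) + ∑ x ∈ B, (if x = v then e v + t * u else e x) * x := by
    rw [← Finset.add_sum_erase A (fun x => (if x = u then cu + t * v else d x) * x) hu,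
        ← Finset.add_sum_erase B (fun x => (if x = v then e v + t * u else e x) * x) hv]
    rw [if_pos rfl, if_pos rfl]
    have hA' : ∑ x ∈ A.erase u, (if x = u then cu + t * v else d x) * x
        = ∑ x ∈ A.erase u, d x * x :=
      Finset.sum_congr rfl fun x hx => by rw [if_neg (Finset.ne_of_mem_erase hx)]
    have hB' : ∑ x ∈ B.erase v, (if x = v then e v + t * u else e x) * x
        = ∑ x ∈ B.erase v, e x * x :=
      Finset.sum_congr rfl fun x hx => by rw [if_neg (Finset.ne_of_mem_erase hx)]
    have hSEsplit : ∑ x ∈ B, e x * x = e v * v + ∑ x ∈ B.erase v, e x * x :=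
      (Finset.add_sum_erase B (fun x => e x * x) hv).symm
    rw [hA', hB']
    linear_combination hE + hSEsplit
  have hbnd : (((1 + k + l) * H ^ 2 : ℕ) : ℤ) = (1 + (k:ℤ) + l) * ((H:ℤ) * H) := by
    push_cast; ring
  -- conclude
  refine ⟨fun x => if x = u then (cu + t * v).toNat else (d x).toNat,
          fun x => if x = v then (e v + t * u).toNat else (e x).toNat, ?_, ?_, ?_⟩
  · intro a _
    beta_reduce
    split_ifs with h
    · exact Int.toNat_le.mpr (by rw [hbnd]; exact hru_ub)
    · refine Int.toNat_le.mpr (by rw [hbnd]; exact le_trans (le_of_lt (hdlt a)) (by linarith))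
  · intro b _
    beta_reduce
    split_ifs with h
    · exact Int.toNat_le.mpr (by rw [hbnd]; exact hsv_ub)
    · refine Int.toNat_le.mpr (by rw [hbnd]; exact le_trans (le_of_lt (helt b)) (by linarith))
  · have cast1 : ((∑ a ∈ A, (if a = u then (cu + t * v).toNat else (d a).toNat) * a : ℕ) : ℤ)
        = ∑ x ∈ A, (if x = u then cu + t * v else d x) * x := by
      push_cast
      refine Finset.sum_congr rfl fun x _ => ?_
      split_ifs with h
      · rw [Int.toNat_of_nonneg hru0]
      · rw [Int.toNat_of_nonneg (hd0 x)]
    have cast2 : ((g + ∑ b ∈ B, (if b = v then (e v + t * u).toNat else (e b).toNat) * b : ℕ) : ℤ)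
        = (g:ℤ) + ∑ x ∈ B, (if x = v then e v + t * u else e x) * x := by
      push_cast
      congr 1
      refine Finset.sum_congr rfl fun x _ => ?_
      split_ifs with h
      · rw [Int.toNat_of_nonneg hsv0]
      · rw [Int.toNat_of_nonneg (he0 x)]
    have hfin := cast1.trans (hEq.trans cast2.symm)
    exact_mod_cast hfin
end

section
/- For any nonempty finite set S = {a₁, …, a_m} of positive integers with gcd g and maximum H, there exist integers c₁, …, c_m with |cᵢ| ≤ max{H/(2g), 1} for all i and Σᵢ cᵢ·aᵢ = g. -/
/-!
If every element of `S` is at most `h` times its gcd, any multiple `m` of the gcd with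
`2 * |m| ≤ h * gcd` is a combination with all coefficients `2 * |c| ≤ h`. Induct on `S`, removing
its largest element `a`; let `d` be the gcd of the rest. The coefficients `c` with
`d ∣ m - c * a` form a residue class, so one of them leaves `v = m - c * a` with
`2 * |v| ≤ lcm a d ≤ h * d`, which the rest represents by induction (their gcd `d` is a multiple
of `gcd a d`, so the hypotheses pass down). That `c` is small because
`h * gcd a d + lcm a d ≤ h * a`.
-/

theorem exists_dvd_sub_mul_two_mul_abs_le_lcm {a d : ℕ} (ha : 0 < a) {m : ℤ}
    (hm : (a.gcd d : ℤ) ∣ m) :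
    ∃ c : ℤ, (d : ℤ) ∣ m - c * a ∧ 2 * |m - c * a| ≤ a.lcm d := by
  obtain ⟨k, rfl⟩ := hm
  set L := a.lcm d
  set v := (a.gcd d : ℤ) * k - a.gcdA d * k * a
  have hv : v = d * (a.gcdB d * k) := by
    simp only [v, Nat.gcd_eq_gcd_ab]; ring
  obtain ⟨e, he⟩ : a ∣ L := Nat.dvd_lcm_left a d
  have hbmod : v.bmod L = v - L * v.bdiv L := eq_sub_of_add_eq (Int.bmod_add_bdiv v L)
  have hrem : (a.gcd d : ℤ) * k - (a.gcdA d * k + v.bdiv L * e) * a = v.bmod L := by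
    rw [hbmod, he]; push_cast; ring
  refine ⟨a.gcdA d * k + v.bdiv L * e, ?_, ?_⟩ <;> rw [hrem]
  · rw [hbmod, hv]
    exact dvd_sub (dvd_mul_right _ _)
      ((Int.natCast_dvd_natCast.2 (Nat.dvd_lcm_right a d)).mul_right _)
  · rcases L.eq_zero_or_pos with hL | hL
    · have hd : d = 0 := by simpa [L, ha.ne'] using hL
      simp [hv, hd, hL]
    · have h₁ := Int.le_bmod (x := v) hL
      have h₂ := Int.bmod_lt (x := v) hL
      rcases abs_cases (v.bmod L) with ⟨h, -⟩ | ⟨h, -⟩ <;> rw [h] <;> omega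

theorem mul_gcd_add_lcm_le_mul {a d h : ℕ} (hda : d < a) (ha : a ≤ h * a.gcd d) :
    h * a.gcd d + a.lcm d ≤ h * a := by
  set D := a.gcd d
  have hD : 0 < D := Nat.gcd_pos_of_pos_left d (by omega)
  obtain ⟨q, hq⟩ : D ∣ a := Nat.gcd_dvd_left a d
  obtain ⟨r, hr⟩ : D ∣ d := Nat.gcd_dvd_right a d
  have hlcm : a.lcm d = q * D * r := by
    apply Nat.eq_of_mul_eq_mul_left hD
    rw [Nat.gcd_mul_lcm, hq, hr]; ring
  have hqh : q ≤ h := Nat.le_of_mul_le_mul_left (by rw [← hq]; linarith) hD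
  have hrq : r < q := Nat.lt_of_mul_lt_mul_left (a := D) (by rwa [← hq, ← hr])
  rw [hlcm, hq]
  nlinarith [Nat.mul_le_mul_right r hqh, Nat.mul_le_mul_left h hrq]

theorem lcm_le_mul_of_le_mul_gcd {a d h : ℕ} (hda : d < a) (ha : a ≤ h * a.gcd d) :
    a.lcm d ≤ h * d := by
  have hD : 0 < a.gcd d := Nat.gcd_pos_of_pos_left d (by omega)
  apply Nat.le_of_mul_le_mul_left _ hD
  rw [Nat.gcd_mul_lcm]
  nlinarith

theorem exists_sum_mul_eq_of_two_mul_abs_le_mul_gcd (h : ℕ) (S : Finset ℕ)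
    (hpos : ∀ x ∈ S, 0 < x) (hle : ∀ x ∈ S, x ≤ h * S.gcd id) (m : ℤ)
    (hm : ((S.gcd id : ℕ) : ℤ) ∣ m)
    (hmh : 2 * |m| ≤ h * (S.gcd id : ℕ)) :
    ∃ c : ℕ → ℤ, (∀ x ∈ S, 2 * |c x| ≤ h) ∧ ∑ x ∈ S, c x * x = m := by
  induction S using Finset.induction_on_max generalizing m with
  | empty => exact ⟨0, by simp, by simp_all⟩
  | insert a s hlt ih =>
    have hgcd : (insert a s).gcd id = a.gcd (s.gcd id) := Finset.gcd_insert
    rw [hgcd] at hle hm hmh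
    set d := s.gcd id
    have ha : 0 < a := hpos a (s.mem_insert_self a)
    have hah : a ≤ h * a.gcd d := hle a (s.mem_insert_self a)
    have hda : d < a := by
      rcases s.eq_empty_or_nonempty with rfl | ⟨b, hb⟩
      · simpa [d] using ha
      · exact (Nat.le_of_dvd (hpos b (s.mem_insert_of_mem hb)) (Finset.gcd_dvd hb)).trans_lt
          (hlt b hb)
    obtain ⟨ca, hdv, hv⟩ := exists_dvd_sub_mul_two_mul_abs_le_lcm ha hm
    have hle' : ∀ x ∈ s, x ≤ h * d := fun x hx =>
      (hle x (s.mem_insert_of_mem hx)).trans <| Nat.mul_le_mul_left h <| Nat.le_of_dvd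
        (Nat.pos_of_dvd_of_pos (Finset.gcd_dvd hx) (hpos x (s.mem_insert_of_mem hx)))
        (Nat.gcd_dvd_right a d)
    obtain ⟨c, hc, hsum⟩ := ih (fun x hx => hpos x (s.mem_insert_of_mem hx)) hle'
      (m - ca * a) hdv (hv.trans (mod_cast lcm_le_mul_of_le_mul_gcd hda hah))
    have hca : 2 * |ca| ≤ h := by
      have ha' : (0 : ℤ) < a := mod_cast ha
      refine le_of_mul_le_mul_right ?_ ha'
      calc 2 * |ca| * a = 2 * |m - (m - ca * a)| := by
            rw [sub_sub_cancel, abs_mul, abs_of_pos ha']; ring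
        _ ≤ 2 * |m| + 2 * |m - ca * a| := by linarith [abs_sub m (m - ca * a)]
        _ ≤ h * a.gcd d + a.lcm d := add_le_add hmh hv
        _ ≤ h * a := mod_cast mul_gcd_add_lcm_le_mul hda hah
    have has : a ∉ s := fun has => (hlt a has).false
    refine ⟨Function.update c a ca, fun x hx => ?_, ?_⟩
    · rcases Finset.mem_insert.1 hx with rfl | hx
      · rwa [Function.update_self]
      · rw [Function.update_of_ne (hlt x hx).ne]
        exact hc x hx
    · rw [Finset.sum_insert has, Function.update_self,
        Finset.sum_congr rfl fun x hx => by rw [Function.update_of_ne (hlt x hx).ne], hsum]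
      ring

/-- Bézout-type bound of Majewski and Havas: for a nonempty finite set `S` of
positive integers with gcd `g` and maximum `H`, the gcd can be written as an
integer combination `Σ c_i·a_i = g` with `|c_i| ≤ max{H/(2g), 1}` for all `i`. -/
theorem majewski_havas (S : Finset ℕ) (hS : S.Nonempty)
    (hpos : ∀ x ∈ S, 0 < x) (g H : ℕ)
    (hg : g = S.gcd id) (hH : H = S.max' hS) :
    ∃ c : ℕ → ℤ,
      (∀ a ∈ S, (|c a| : ℚ) ≤ max ((H : ℚ) / (2 * g)) 1) ∧
      ∑ a ∈ S, c a * (a : ℤ) = (g : ℤ) := by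
  obtain ⟨a₀, ha₀⟩ := id hS
  have hg0 : 0 < g := hg ▸ Nat.pos_of_dvd_of_pos (Finset.gcd_dvd ha₀) (hpos a₀ ha₀)
  have hgH : g ∣ H := hg ▸ hH ▸ Finset.gcd_dvd (S.max'_mem hS)
  -- scaling by `max (H / g) 2` rather than `H / g` covers the case `S = {g}` as well
  set h := max (H / g) 2
  have hle : ∀ x ∈ S, x ≤ h * S.gcd id := fun x hx => by
    rw [← hg]
    calc x ≤ H := hH ▸ S.le_max' x hx
      _ = H / g * g := (Nat.div_mul_cancel hgH).symm
      _ ≤ h * g := Nat.mul_le_mul_right g (le_max_left _ _)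
  have hg2 : 2 * |(g : ℤ)| ≤ h * g := by
    rw [abs_of_nonneg (by positivity)]
    exact_mod_cast Nat.mul_le_mul_right g (le_max_right _ _)
  obtain ⟨c, hc, hsum⟩ :=
    exists_sum_mul_eq_of_two_mul_abs_le_mul_gcd h S hpos hle g (hg ▸ dvd_rfl) (hg ▸ hg2)
  have hhalf : (h : ℚ) / 2 = max ((H : ℚ) / (2 * g)) 1 := by
    rw [Nat.cast_max, Nat.cast_div hgH (by positivity), ← max_div_div_right zero_le_two,
      div_div, mul_comm]
    norm_num
  refine ⟨c, fun a ha => ?_, hg ▸ hsum⟩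
  rw [← hhalf, le_div_iff₀ zero_lt_two, mul_comm]
  exact_mod_cast hc a ha
end

section
/- Let F be a forest in which every leaf is labeled typical or mixed, and every internal node has exactly two children; a node labeled atypical must have at least one child labeled atypical or mixed. Suppose additionally that along any path of atypical nodes going downward, the path has length at most q, and the number of mixed nodes is at most M. Then the number of atypical nodes in F is at most q·M. -/
inductive CompLabel : Type
  | large | typical | atypical | mixed
  deriving DecidableEq

/-- Counting atypical nodes: in a finite labeled forest (given by a parent map)
where every leaf is typical or mixed, every internal node has exactly two
children, every atypical node has a child labeled atypical or mixed, every
downward chain of atypical nodes has at most `q` nodes, and there are at most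
`M` mixed nodes, the number of atypical nodes is at most `q·M`. -/
theorem atypical_count_bound (V : Type) [Fintype V]
    (parent : V → Option V) (label : V → CompLabel) (q M : ℕ)
    (hleaf : ∀ v : V, (∀ u : V, parent u ≠ some v) →
      label v = CompLabel.typical ∨ label v = CompLabel.mixed)
    (hbinary : ∀ v : V, (∃ u : V, parent u = some v) →
      Nat.card {u : V // parent u = some v} = 2)
    (hchild : ∀ v : V, label v = CompLabel.atypical →
      ∃ u : V, parent u = some v ∧
        (label u = CompLabel.atypical ∨ label u = CompLabel.mixed))
    (hchain : ∀ (k : ℕ) (f : ℕ → V),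
      (∀ j < k, parent (f (j + 1)) = some (f j)) →
      (∀ j ≤ k, label (f j) = CompLabel.atypical) → k + 1 ≤ q)
    (hmixed : Nat.card {v : V // label v = CompLabel.mixed} ≤ M) :
    Nat.card {v : V // label v = CompLabel.atypical} ≤ q * M := by
  classical
  obtain ⟨step, hstep⟩ : ∃ step : V → V, ∀ v, label v = CompLabel.atypical →
      parent (step v) = some v ∧
      (label (step v) = CompLabel.atypical ∨ label (step v) = CompLabel.mixed) := by
    refine ⟨fun v => if h : label v = CompLabel.atypical then (hchild v h).choose else v, ?_⟩
    intro v hv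
    simp only [dif_pos hv]
    exact (hchild v hv).choose_spec
  have hex : ∀ v, label v = CompLabel.atypical →
      ∃ j, label (step^[j] v) ≠ CompLabel.atypical := by
    intro v hv
    by_contra h
    push_neg at h
    have hpar : ∀ j < q, parent (step^[j + 1] v) = some (step^[j] v) := by
      intro j _
      rw [Function.iterate_succ_apply']
      exact (hstep _ (h j)).1
    have hc := hchain q (fun j => step^[j] v) hpar (fun j _ => h j)
    omega
  set d : ∀ v, label v = CompLabel.atypical → ℕ := fun v hv => Nat.find (hex v hv) with hd
  have hdn : ∀ v hv, label (step^[d v hv] v) ≠ CompLabel.atypical :=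
    fun v hv => Nat.find_spec (hex v hv)
  have hlt : ∀ v hv, ∀ j < d v hv, label (step^[j] v) = CompLabel.atypical :=
    fun v hv j hj => not_not.mp (Nat.find_min (hex v hv) hj)
  have hpos : ∀ v hv, 1 ≤ d v hv := by
    intro v hv
    by_contra h
    have h0 : d v hv = 0 := by omega
    exact hdn v hv (by simpa [h0] using hv)
  have hmix : ∀ v hv, label (step^[d v hv] v) = CompLabel.mixed := by
    intro v hv
    have h1 := hpos v hv
    have heq : step^[d v hv] v = step (step^[d v hv - 1] v) := by
      have h2 := Function.iterate_succ_apply' step (d v hv - 1) v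
      have h3 : (d v hv - 1).succ = d v hv := by omega
      rw [h3] at h2
      exact h2
    rcases (hstep (step^[d v hv - 1] v) (hlt v hv (d v hv - 1) (by omega))).2 with h | h
    · rw [← heq] at h
      exact absurd h (hdn v hv)
    · rw [heq]; exact h
  have hle : ∀ v hv, d v hv ≤ q := by
    intro v hv
    have h1 := hpos v hv
    have hpar : ∀ j < d v hv - 1, parent (step^[j + 1] v) = some (step^[j] v) := by
      intro j hj
      rw [Function.iterate_succ_apply']
      exact (hstep _ (hlt v hv j (by omega))).1
    have hc := hchain (d v hv - 1) (fun j => step^[j] v) hpar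
      (fun j hj => hlt v hv j (by omega))
    omega
  have key : ∀ n (v w : V), (∀ j < n, label (step^[j] v) = CompLabel.atypical) →
      (∀ j < n, label (step^[j] w) = CompLabel.atypical) →
      step^[n] v = step^[n] w → v = w := by
    intro n
    induction n with
    | zero => intro v w _ _ h; simpa using h
    | succ n ih =>
      intro v w hv hw h
      rw [Function.iterate_succ_apply', Function.iterate_succ_apply'] at h
      have h1 := (hstep _ (hv n (by omega))).1
      have h2 := (hstep _ (hw n (by omega))).1
      rw [h] at h1
      have := Option.some.inj (h1.symm.trans h2)
      exact ih v w (fun j hj => hv j (by omega)) (fun j hj => hw j (by omega)) this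
  have hq : ∀ v hv, d v hv - 1 < q := by
    intro v hv
    have := hle v hv
    have := hpos v hv
    omega
  set Φ : {v : V // label v = CompLabel.atypical} →
      {m : V // label m = CompLabel.mixed} × Fin q :=
    fun x => (⟨step^[d x.1 x.2] x.1, hmix x.1 x.2⟩, ⟨d x.1 x.2 - 1, hq x.1 x.2⟩) with hΦdef
  have hΦ : Function.Injective Φ := by
    rintro ⟨v, hv⟩ ⟨w, hw⟩ h
    have h1 : step^[d v hv] v = step^[d w hw] w :=
      congrArg (fun p : {m : V // label m = CompLabel.mixed} × Fin q => (p.1 : V)) h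
    have h2 : d v hv - 1 = d w hw - 1 :=
      congrArg (fun p : {m : V // label m = CompLabel.mixed} × Fin q => (p.2 : ℕ)) h
    have hdvw : d v hv = d w hw := by
      have := hpos v hv; have := hpos w hw; omega
    rw [hdvw] at h1
    exact Subtype.ext (key (d w hw) v w (fun j hj => hlt v hv j (hdvw ▸ hj))
      (hlt w hw) h1)
  calc Nat.card {v : V // label v = CompLabel.atypical}
      = Fintype.card {v : V // label v = CompLabel.atypical} := Nat.card_eq_fintype_card
    _ ≤ Fintype.card ({m : V // label m = CompLabel.mixed} × Fin q) :=
        Fintype.card_le_of_injective Φ hΦ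
    _ = Fintype.card {m : V // label m = CompLabel.mixed} * q := by
        simp [Fintype.card_prod]
    _ ≤ M * q := Nat.mul_le_mul_right q (by
        rw [← Nat.card_eq_fintype_card]; exact hmixed)
    _ = q * M := Nat.mul_comm _ _
end
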